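/- For a reduced cyclic word W, the set LP₁(W) of linked pairs of occurrences of subwords of W contains at most len(W)·(len(W)-1) elements. -/

import Mathlib

/-!
Combinatorial model of the Goldman–Turaev Lie bialgebra of curves on a surface
with boundary, following M. Chas, "Combinatorial Lie bialgebras of curves on
surfaces".

The alphabet `𝔸ₙ = {a₁,…,aₙ, ā₁,…,āₙ}` is modelled by `Letter n := Fin n × Bool`,
with the bar involution flipping the boolean.  Linear words are lists of letters;
a cyclic word is a list up to rotation (`List.IsRotated`).
-/

open List

abbrev Letter (n : ℕ) := Fin n × Bool

namespace ChasCW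

variable {n : ℕ}

/-- The bar involution `x ↦ x̄` on letters. -/
def bar (x : Letter n) : Letter n := (x.1, !x.2)

/-- The formal inverse `W̄` of a linear word `W`. -/
def wordInv (w : List (Letter n)) : List (Letter n) := (w.map bar).reverse

/-- A linear word is freely reduced if no letter is followed by its inverse. -/
def Reduced (w : List (Letter n)) : Prop := w.Chain' (fun a b => b ≠ bar a)

/-- A nonempty word all of whose cyclic rotations are freely reduced:
a representative of a reduced cyclic word. -/
def CyclicallyReduced (w : List (Letter n)) : Prop :=
  w ≠ [] ∧ ∀ i, Reduced (w.rotate i)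

/-- The type of cyclic words: lists of letters up to rotation. -/
abbrev CWord (n : ℕ) := Quotient (List.IsRotated.setoid (Letter n))

/-- The cyclic word `c(w)` determined by a linear word `w`. -/
def cw (w : List (Letter n)) : CWord n := Quotient.mk _ w

/-- A surface symbol: a reduced cyclic word containing every letter of the
alphabet exactly once. -/
def SurfaceSymbol (O : List (Letter n)) : Prop :=
  CyclicallyReduced O ∧ ∀ x : Letter n, O.count x = 1

/-- `w` embeds injectively and orientation-preservingly as a cyclic subsequence
of the cyclic word `O`. -/
def CyclicEmbeds (w O : List (Letter n)) : Prop :=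
  w.Nodup ∧ ∃ i ≤ w.length, ∃ j ≤ O.length, (w.rotate i).Sublist (O.rotate j)

open Classical in
/-- The orientation `o(w) ∈ {-1,0,1}` of a cyclic word relative to the surface
symbol `O`: `1` for an orientation-preserving embedding of rings, `-1` for an
orientation-reversing one, `0` otherwise. -/
noncomputable def orient (O w : List (Letter n)) : ℤ :=
  if CyclicEmbeds w O then 1 else if CyclicEmbeds w O.reverse then -1 else 0

/-- Case (1) of Definition 2.1: `P = p₁p₂`, `Q = q₁q₂` and
`o(c(p̄₁q̄₁p₂q₂)) ≠ 0`. -/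
def Linked1 (O : List (Letter n)) (p₁ p₂ q₁ q₂ : Letter n) : Prop :=
  Reduced [p₁, p₂] ∧ Reduced [q₁, q₂] ∧ orient O [bar p₁, bar q₁, p₂, q₂] ≠ 0

/-- Case (2) of Definition 2.1: `P = p₁Yp₂`, `Q = q₁Yq₂`, `p₁ ≠ q₁`, `p₂ ≠ q₂`,
`Y = x₁X x₂` nonempty, and `o(c(p̄₁q̄₁x₁)) = o(c(p₂q₂x̄₂))`. -/
def Linked2 (O : List (Letter n)) (p₁ p₂ q₁ q₂ x₁ x₂ : Letter n)
    (Y : List (Letter n)) : Prop :=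
  Y ≠ [] ∧ Y.head? = some x₁ ∧ Y.getLast? = some x₂ ∧
  p₁ ≠ q₁ ∧ p₂ ≠ q₂ ∧
  Reduced (p₁ :: (Y ++ [p₂])) ∧ Reduced (q₁ :: (Y ++ [q₂])) ∧
  orient O [bar p₁, bar q₁, x₁] = orient O [p₂, q₂, bar x₂]

/-- Case (3) of Definition 2.1: `P = p₁Yp₂`, `Q = q₁Ȳq₂`, `p₁ ≠ q̄₂`, `p₂ ≠ q̄₁`,
`Y = x₁X x₂` nonempty, and `o(c(q₂p̄₁x₁)) = o(c(q̄₁p₂x̄₂))`. -/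
def Linked3 (O : List (Letter n)) (p₁ p₂ q₁ q₂ x₁ x₂ : Letter n)
    (Y : List (Letter n)) : Prop :=
  Y ≠ [] ∧ Y.head? = some x₁ ∧ Y.getLast? = some x₂ ∧
  p₁ ≠ bar q₂ ∧ p₂ ≠ bar q₁ ∧
  Reduced (p₁ :: (Y ++ [p₂])) ∧ Reduced (q₁ :: (wordInv Y ++ [q₂])) ∧
  orient O [q₂, bar p₁, x₁] = orient O [bar q₁, p₂, bar x₂]

/-- `(P,Q)` is an `O`-linked pair (Definition 2.1). -/
def LinkedPair (O P Q : List (Letter n)) : Prop :=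
  (∃ p₁ p₂ q₁ q₂, P = [p₁, p₂] ∧ Q = [q₁, q₂] ∧ Linked1 O p₁ p₂ q₁ q₂) ∨
  (∃ p₁ p₂ q₁ q₂ x₁ x₂ Y, P = p₁ :: (Y ++ [p₂]) ∧ Q = q₁ :: (Y ++ [q₂]) ∧
    Linked2 O p₁ p₂ q₁ q₂ x₁ x₂ Y) ∨
  (∃ p₁ p₂ q₁ q₂ x₁ x₂ Y, P = p₁ :: (Y ++ [p₂]) ∧ Q = q₁ :: (wordInv Y ++ [q₂]) ∧
    Linked3 O p₁ p₂ q₁ q₂ x₁ x₂ Y)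

/-- The sign of a linked pair `(P,Q)`, computed from the (unique) decomposition
of `P` and `Q` prescribed by Definition 2.1. -/
noncomputable def signLP (O P Q : List (Letter n)) : ℤ :=
  match P, Q with
  | p₁ :: P', q₁ :: Q' =>
    match P'.getLast?, Q'.getLast? with
    | some p₂, some q₂ =>
      let Y := P'.dropLast
      let Z := Q'.dropLast
      if Y = [] then orient O [bar p₁, bar q₁, p₂, q₂]
      else
        match Y.head?, Y.getLast? with
        | some x₁, some _ =>
          if Z = wordInv Y then orient O [q₂, bar p₁, x₁]
          else orient O [bar p₁, bar q₁, x₁]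
        | _, _ => 0
    | _, _ => 0
  | _, _ => 0

/-- The subword of length `l` of (a large power of) the cyclic word `V`,
starting at position `i`.  This encodes occurrences of subwords of powers
of `V`. -/
def segment (V : List (Letter n)) (i l : ℕ) : List (Letter n) :=
  (((List.replicate (l + 1) V).flatten).rotate i).take l

/-- The set `LP₁(W)` of linked pairs of occurrences of subwords of `W`,
an occurrence being encoded by its starting position and its length. -/
def LP1 (O W : List (Letter n)) : Set ((ℕ × ℕ) × (ℕ × ℕ)) :=
  {e | e.1.1 < W.length ∧ e.2.1 < W.length ∧ e.1.2 ≤ W.length ∧ e.2.2 ≤ W.length ∧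
    LinkedPair O (segment W e.1.1 e.1.2) (segment W e.2.1 e.2.2)}

/-- The set `LP₂(V,W)` of linked pairs of the pair of cyclic words `(V,W)`:
pairs of occurrences of subwords of powers of `V` resp. `W` which are linked.
(The normalization `len V^{j-1} < len P ≤ len V^j` is implicit in the encoding
of an occurrence by a starting position `< len V` and a length.) -/
def LP2 (O V W : List (Letter n)) : Set ((ℕ × ℕ) × (ℕ × ℕ)) :=
  {e | e.1.1 < V.length ∧ e.2.1 < W.length ∧
    LinkedPair O (segment V e.1.1 e.1.2) (segment W e.2.1 e.2.2)}

end ChasCW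

namespace ChasCW

/-!
A linked pair `(P, Q)` in `LP₁(W)` is determined by the position of `P` in `W` and one further
position. In cases (1) and (2), `P = p₁Yp₂` and `Q = q₁Yq₂`, the further position is that of `Q`,
and `Y` is the longest common word following the two positions, since `p₂ ≠ q₂`. In case (3),
`Q = q₁Ȳq₂`, it is the position of the last letter `x̄₁` of `Ȳ`, and `Y` is recovered by reading
`W` backwards from there against `P`, since `p₂ ≠ q̄₁`. The two positions are distinct (`p₁ ≠ q₁`,
resp. `p₁ ≠ x̄₁` as `P` is reduced), and the cases do not collide: the letter `c` at the further
position and the second letter `d` of `P` satisfy `c̄ ≠ d` in cases (1) and (2), but `c̄ = d` in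
case (3). So `LP₁(W)` injects into the ordered pairs of distinct positions of `W`.
-/

open List

variable {n : ℕ}

theorem _root_.Function.Periodic.eq_of_modEq {α : Type*} {f : ℕ → α} {c a b : ℕ}
    (hf : Function.Periodic f c) (h : a ≡ b [MOD c]) : f a = f b := by
  rw [← hf.map_mod_nat a, ← hf.map_mod_nat b, h]

@[simp]
lemma bar_bar (x : Letter n) : bar (bar x) = x := by
  simp [bar]

@[simp]
lemma length_wordInv (Y : List (Letter n)) : (wordInv Y).length = Y.length := by
  simp [wordInv]

lemma getElem_wordInv {Y : List (Letter n)} {t : ℕ} (ht : t < (wordInv Y).length) :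
    (wordInv Y)[t] = bar (Y[Y.length - 1 - t]'(by rw [length_wordInv] at ht; omega)) := by
  simp [wordInv]

lemma Reduced.ne_bar_of_cons_cons {a b : Letter n} {l : List (Letter n)}
    (h : Reduced (a :: b :: l)) : b ≠ bar a :=
  (isChain_cons_cons.mp h).1

lemma nodup_of_orient_ne_zero {O w : List (Letter n)} (h : orient O w ≠ 0) : w.Nodup := by
  unfold orient at h
  split_ifs at h with h₁ h₂
  exacts [h₁.1, h₂.1, absurd rfl h]

section CyclicIndexing

variable {α : Type*} (W : List α) (hW : 0 < W.length)

def cyc (m : ℕ) : α := W[m % W.length]'(Nat.mod_lt _ hW)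

lemma periodic_cyc : Function.Periodic (cyc W hW) W.length := fun m => by
  simp [cyc]

variable {W hW}

lemma getElem_flatten_replicate {k j : ℕ} (hj : j < ((replicate k W).flatten).length) :
    ((replicate k W).flatten)[j] = cyc W hW j := by
  induction k generalizing j with
  | zero => simp at hj
  | succ k ih =>
    simp only [replicate_succ, flatten_cons]
    rcases lt_or_ge j W.length with hlt | hle
    · simp [getElem_append_left hlt, cyc, Nat.mod_eq_of_lt hlt]
    · rw [getElem_append_right hle, ih, ← periodic_cyc W hW, Nat.sub_add_cancel hle]

end CyclicIndexing

section Segment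

variable {W : List (Letter n)} (hW : 0 < W.length)
include hW

lemma length_segment (i l : ℕ) : (segment W i l).length = l := by
  simp only [segment, length_take, length_rotate, length_flatten, map_replicate, sum_replicate,
    smul_eq_mul]
  exact min_eq_left (Nat.le_mul_of_pos_right _ hW |>.trans' (Nat.le_succ l))

lemma getElem_segment {i l m : ℕ} (hm : m < (segment W i l).length) :
    (segment W i l)[m] = cyc W hW (i + m) := by
  simp only [segment, getElem_take, getElem_rotate, getElem_flatten_replicate (hW := hW)]
  refine (periodic_cyc W hW).eq_of_modEq ?_
  simp only [length_flatten, map_replicate, sum_replicate, smul_eq_mul]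
  rw [add_comm m i]
  exact Nat.mod_mul_left_mod _ _ _

lemma eq_cyc_of_segment_eq_cons_append {i l : ℕ} {p₁ p₂ : Letter n} {Y : List (Letter n)}
    (h : segment W i l = p₁ :: (Y ++ [p₂])) :
    l = Y.length + 2 ∧ p₁ = cyc W hW i ∧
      (∀ m (hm : m < Y.length), Y[m] = cyc W hW (i + 1 + m)) ∧
      p₂ = cyc W hW (i + 1 + Y.length) := by
  have hget (t : ℕ) (ht : t < Y.length + 2) :
      (p₁ :: (Y ++ [p₂]))[t]'(by simp; omega) = cyc W hW (i + t) := by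
    rw [← getElem_segment hW (by rw [h]; simp; omega)]
    exact getElem_of_eq h.symm _
  refine ⟨by simpa [length_segment hW] using congrArg length h, by simpa using hget 0 (by omega),
    fun m hm => ?_, ?_⟩
  · simpa [getElem_append_left hm, add_assoc, add_comm 1] using hget (m + 1) (by omega)
  · simpa [add_assoc, add_comm 1] using hget (Y.length + 1) (by omega)

end Segment

section Shapes

/-- Read from positions `i` and `j`, `w` gives `P = p₁Yp₂` and `Q = q₁Yq₂` with `|Y| = k`, as in
cases (1) and (2) of Definition 2.1. -/
structure ParallelAt (w : ℕ → Letter n) (i j k : ℕ) : Prop where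
  head_ne : w i ≠ w j
  mid_eq : ∀ m < k, w (i + 1 + m) = w (j + 1 + m)
  last_ne : w (i + 1 + k) ≠ w (j + 1 + k)
  bar_head_ne : bar (w j) ≠ w (i + 1)

/-- Read from position `i`, `w` gives `P = p₁Yp₂` with `|Y| = k`, and `w` carries `Ȳ` ending at
position `J`, preceded by `q₁ = w (J - k)`, as in case (3) of Definition 2.1. -/
structure AntiparallelAt (w : ℕ → Letter n) (i J k : ℕ) : Prop where
  length_pos : 0 < k
  length_le : k ≤ J
  mid_eq_bar : ∀ m < k, w (J - m) = bar (w (i + 1 + m))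
  last_ne_bar : w (i + 1 + k) ≠ bar (w (J - k))
  reduced : w (i + 1) ≠ bar (w i)

variable {w : ℕ → Letter n} {L i j J J' k k' : ℕ}

lemma ParallelAt.length_unique (h : ParallelAt w i j k) (h' : ParallelAt w i j k') : k = k' := by
  by_contra hne
  rcases Nat.lt_or_gt_of_ne hne with hlt | hlt
  · exact h.last_ne (h'.mid_eq k hlt)
  · exact h'.last_ne (h.mid_eq k' hlt)

lemma AntiparallelAt.not_lt_length (hw : Function.Periodic w L) (hJ : J ≡ J' [MOD L])
    (h : AntiparallelAt w i J k) (h' : AntiparallelAt w i J' k') : ¬ k < k' := fun hlt => by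
  have hk : w (J - k) = w (J' - k) :=
    hw.eq_of_modEq (hJ.sub_right h.length_le (hlt.le.trans h'.length_le))
  exact h.last_ne_bar (by rw [hk, h'.mid_eq_bar k hlt, bar_bar])

lemma AntiparallelAt.length_unique (hw : Function.Periodic w L) (hJ : J ≡ J' [MOD L])
    (h : AntiparallelAt w i J k) (h' : AntiparallelAt w i J' k') : k = k' :=
  le_antisymm (not_lt.mp (h'.not_lt_length hw hJ.symm h)) (not_lt.mp (h.not_lt_length hw hJ h'))

lemma ParallelAt.not_antiparallelAt (hw : Function.Periodic w L) (hjJ : j ≡ J [MOD L])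
    (h : ParallelAt w i j k) (h' : AntiparallelAt w i J k') : False := by
  have hJ : w J = bar (w (i + 1)) := h'.mid_eq_bar 0 h'.length_pos
  exact h.bar_head_ne (by rw [hw.eq_of_modEq hjJ, hJ, bar_bar])

lemma ParallelAt.not_modEq (hw : Function.Periodic w L) (h : ParallelAt w i j k) :
    ¬ i ≡ j [MOD L] := fun hij => h.head_ne (hw.eq_of_modEq hij)

lemma AntiparallelAt.not_modEq (hw : Function.Periodic w L) (h : AntiparallelAt w i J k) :
    ¬ i ≡ J [MOD L] := fun hiJ => h.reduced (by
  simpa [← hw.eq_of_modEq hiJ] using (congrArg bar (h.mid_eq_bar 0 h.length_pos)).symm)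

end Shapes

def IsLinked3 (O P Q : List (Letter n)) : Prop :=
  ∃ p₁ p₂ q₁ q₂ x₁ x₂ Y, P = p₁ :: (Y ++ [p₂]) ∧ Q = q₁ :: (wordInv Y ++ [q₂]) ∧
    Linked3 O p₁ p₂ q₁ q₂ x₁ x₂ Y

section LinkedSegments

variable {O W : List (Letter n)} (hW : 0 < W.length) {i j l l₂ : ℕ}
  {p₁ p₂ q₁ q₂ x₁ x₂ : Letter n} {Y : List (Letter n)}
include hW

lemma parallelAt_of_linked1 (hP : segment W i l = [p₁, p₂]) (hQ : segment W j l₂ = [q₁, q₂])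
    (h : Linked1 O p₁ p₂ q₁ q₂) : l = 2 ∧ l₂ = 2 ∧ ParallelAt (cyc W hW) i j 0 := by
  obtain ⟨hl, rfl, -, rfl⟩ := eq_cyc_of_segment_eq_cons_append hW (Y := []) hP
  obtain ⟨hl₂, rfl, -, rfl⟩ := eq_cyc_of_segment_eq_cons_append hW (Y := []) hQ
  have hnd := nodup_of_orient_ne_zero h.2.2
  simp only [nodup_cons, mem_cons, not_mem_nil, or_false, not_or] at hnd
  obtain ⟨⟨h₁, -, -⟩, ⟨h₃, -⟩, h₄, -⟩ := hnd
  exact ⟨hl, hl₂, fun e => h₁ (by rw [e]), by simp, h₄, h₃⟩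

lemma parallelAt_of_linked2 (hP : segment W i l = p₁ :: (Y ++ [p₂]))
    (hQ : segment W j l₂ = q₁ :: (Y ++ [q₂])) (h : Linked2 O p₁ p₂ q₁ q₂ x₁ x₂ Y) :
    l = Y.length + 2 ∧ l₂ = Y.length + 2 ∧ ParallelAt (cyc W hW) i j Y.length := by
  obtain ⟨hY, -, -, hpq₁, hpq₂, -, hQred, -⟩ := h
  obtain ⟨hl, rfl, hYP, rfl⟩ := eq_cyc_of_segment_eq_cons_append hW hP
  obtain ⟨hl₂, rfl, hYQ, rfl⟩ := eq_cyc_of_segment_eq_cons_append hW hQ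
  obtain ⟨y, Y', rfl⟩ := exists_cons_of_ne_nil hY
  refine ⟨hl, hl₂, hpq₁, fun m hm => by rw [← hYP m hm, hYQ m hm], hpq₂, ?_⟩
  have hy : y = cyc W hW (i + 1) := hYP 0 (by simp)
  exact hy ▸ hQred.ne_bar_of_cons_cons.symm

lemma antiparallelAt_of_linked3 (hP : segment W i l = p₁ :: (Y ++ [p₂]))
    (hQ : segment W j l₂ = q₁ :: (wordInv Y ++ [q₂])) (h : Linked3 O p₁ p₂ q₁ q₂ x₁ x₂ Y) :
    l = Y.length + 2 ∧ l₂ = Y.length + 2 ∧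
      AntiparallelAt (cyc W hW) i (j + Y.length) Y.length := by
  obtain ⟨hY, -, -, -, hpq, hPred, -, -⟩ := h
  obtain ⟨hl, rfl, hYP, rfl⟩ := eq_cyc_of_segment_eq_cons_append hW hP
  obtain ⟨hl₂, rfl, hYQ, rfl⟩ := eq_cyc_of_segment_eq_cons_append hW hQ
  simp only [length_wordInv] at hl₂ hYQ
  refine ⟨hl, hl₂, ⟨length_pos_iff.mpr hY, by omega, fun m hm => ?_, by simpa using hpq, ?_⟩⟩
  · have h := hYQ (Y.length - 1 - m) (by omega)
    rw [getElem_wordInv] at h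
    simp only [show Y.length - 1 - (Y.length - 1 - m) = m by omega,
      show j + 1 + (Y.length - 1 - m) = j + Y.length - m by omega, hYP m hm] at h
    exact h.symm
  · obtain ⟨y, Y', rfl⟩ := exists_cons_of_ne_nil hY
    have hy : y = cyc W hW (i + 1) := hYP 0 (by simp)
    exact hy ▸ hPred.ne_bar_of_cons_cons

lemma exists_antiparallelAt_or_parallelAt (h : LinkedPair O (segment W i l) (segment W j l₂)) :
    ∃ k, l = k + 2 ∧ l₂ = k + 2 ∧
      (IsLinked3 O (segment W i l) (segment W j l₂) ∧ AntiparallelAt (cyc W hW) i (j + k) k ∨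
        ¬ IsLinked3 O (segment W i l) (segment W j l₂) ∧ ParallelAt (cyc W hW) i j k) := by
  by_cases h3 : IsLinked3 O (segment W i l) (segment W j l₂)
  · obtain ⟨p₁, p₂, q₁, q₂, x₁, x₂, Y, hP, hQ, hL⟩ := id h3
    obtain ⟨hl, hl₂, hA⟩ := antiparallelAt_of_linked3 hW hP hQ hL
    exact ⟨Y.length, hl, hl₂, .inl ⟨h3, hA⟩⟩
  · rcases h with ⟨p₁, p₂, q₁, q₂, hP, hQ, hL⟩ | ⟨p₁, p₂, q₁, q₂, x₁, x₂, Y, hP, hQ, hL⟩ | h3'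
    · obtain ⟨hl, hl₂, hPar⟩ := parallelAt_of_linked1 hW hP hQ hL
      exact ⟨0, hl, hl₂, .inr ⟨h3, hPar⟩⟩
    · obtain ⟨hl, hl₂, hPar⟩ := parallelAt_of_linked2 hW hP hQ hL
      exact ⟨Y.length, hl, hl₂, .inr ⟨h3, hPar⟩⟩
    · exact absurd h3' h3

end LinkedSegments

open Classical in
/-- The position of `P` and that of `Q`, except that in case (3) the second one is the position of
the last letter of `Ȳ`. -/
noncomputable def anchorPair (O W : List (Letter n)) (e : (ℕ × ℕ) × (ℕ × ℕ)) : ℕ × ℕ :=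
  (e.1.1, (if IsLinked3 O (segment W e.1.1 e.1.2) (segment W e.2.1 e.2.2)
    then e.2.1 + (e.2.2 - 2) else e.2.1) % W.length)

section Anchor

variable {O W : List (Letter n)}

lemma mapsTo_anchorPair :
    Set.MapsTo (anchorPair O W) (LP1 O W) ((Finset.range W.length).offDiag : Set (ℕ × ℕ)) := by
  rintro ⟨⟨i, l⟩, j, l₂⟩ ⟨hi, hj, -, -, h⟩
  have hW : 0 < W.length := by omega
  have hw := periodic_cyc W hW
  simp only [anchorPair, Finset.coe_offDiag, Set.mem_offDiag, Finset.coe_range, Set.mem_Iio]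
  refine ⟨hi, Nat.mod_lt _ hW, fun hij => ?_⟩
  replace hij : i ≡ _ [MOD W.length] := (Nat.mod_eq_of_lt hi).trans hij
  obtain ⟨k, rfl, rfl, ⟨h3, hA⟩ | ⟨h3, hP⟩⟩ := exists_antiparallelAt_or_parallelAt hW h
  · simp only [if_pos h3, Nat.add_sub_cancel] at hij
    exact hA.not_modEq hw hij
  · simp only [if_neg h3] at hij
    exact hP.not_modEq hw hij

lemma injOn_anchorPair : Set.InjOn (anchorPair O W) (LP1 O W) := by
  rintro ⟨⟨i, l⟩, j, l₂⟩ ⟨hi, hj, -, -, h⟩ ⟨⟨i', l'⟩, j', l₂'⟩ ⟨-, hj', -, -, h'⟩ heq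
  have hW : 0 < W.length := by omega
  have hw := periodic_cyc W hW
  simp only [anchorPair, Prod.mk.injEq] at heq
  obtain ⟨rfl, hmod⟩ := heq
  change _ ≡ _ [MOD W.length] at hmod
  obtain ⟨k, rfl, rfl, ⟨h3, hA⟩ | ⟨h3, hP⟩⟩ := exists_antiparallelAt_or_parallelAt hW h <;>
  obtain ⟨k', rfl, rfl, ⟨h3', hA'⟩ | ⟨h3', hP'⟩⟩ := exists_antiparallelAt_or_parallelAt hW h'
  · simp only [if_pos h3, if_pos h3', Nat.add_sub_cancel] at hmod
    obtain rfl := hA.length_unique hw hmod hA'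
    rw [(Nat.ModEq.add_right_cancel' k hmod).eq_of_lt_of_lt hj hj']
  · simp only [if_pos h3, if_neg h3', Nat.add_sub_cancel] at hmod
    exact (hP'.not_antiparallelAt hw hmod.symm hA).elim
  · simp only [if_neg h3, if_pos h3', Nat.add_sub_cancel] at hmod
    exact (hP.not_antiparallelAt hw hmod hA').elim
  · simp only [if_neg h3, if_neg h3'] at hmod
    obtain rfl := hmod.eq_of_lt_of_lt hj hj'
    rw [hP.length_unique hP']

end Anchor

theorem LP1_card_le_general {n : ℕ} (O W : List (Letter n)) :
    (LP1 O W).Finite ∧ (LP1 O W).ncard ≤ W.length * (W.length - 1) := by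
  have hfin := (Finset.range W.length).offDiag.finite_toSet
  refine ⟨hfin.of_injOn mapsTo_anchorPair injOn_anchorPair, ?_⟩
  calc (LP1 O W).ncard
      ≤ ((Finset.range W.length).offDiag : Set (ℕ × ℕ)).ncard :=
        Set.ncard_le_ncard_of_injOn _ mapsTo_anchorPair injOn_anchorPair hfin
    _ = W.length * (W.length - 1) := by
        rw [Set.ncard_coe_finset, Finset.offDiag_card, Finset.card_range, Nat.mul_sub_one]

/-- Proposition 2.7(b): for a reduced cyclic word `W`, the set
`LP₁(W)` of linked pairs of occurrences of subwords of `W` is finite and has at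
most `len W · (len W - 1)` elements. -/
theorem LP1_card_le {n : ℕ} (O W : List (Letter n))
    (hO : SurfaceSymbol O) (hW : CyclicallyReduced W) :
    (LP1 O W).Finite ∧ (LP1 O W).ncard ≤ W.length * (W.length - 1) :=
  LP1_card_le_general O W

end ChasCW
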